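/- arXiv:1705.09218 — 2 statements merged into one kernel-verified Lean document; each statement's English description precedes it below -/
import Mathlib

section
/- The map sending each closed subset S of the rotation poset to the stable matching obtained from the man-optimal matching M0 by eliminating the rotations of S in any order consistent with the poset precedence is a bijection between closed subsets of the rotation poset and stable matchings; moreover, for closed subsets S, S' corresponding to stable matchings M, M', M dominates M' if and only if S ⊆ S'. -/
/-- A stable-marriage instance with `n` men and `n` women: each man `m` ranks the
women via `mrank m` (lower rank = more preferred), each woman `w` ranks the men
via `wrank w`; rankings are strict, i.e. injective. -/
structure SMInst (n : ℕ) where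
  mrank : Fin n → Fin n → ℕ
  wrank : Fin n → Fin n → ℕ
  mrank_inj : ∀ m, Function.Injective (mrank m)
  wrank_inj : ∀ w, Function.Injective (wrank w)

namespace SMInst

variable {n : ℕ} (I : SMInst n)

/-- A matching is a bijection from men to women; the pair `(m, w)` blocks `M` if `m`
strictly prefers `w` to his partner `M m` and `w` strictly prefers `m` to her partner. -/
def Blocks (M : Fin n ≃ Fin n) (m w : Fin n) : Prop :=
  I.mrank m w < I.mrank m (M m) ∧ I.wrank w m < I.wrank w (M.symm w)

/-- A matching is stable iff it admits no blocking pair. -/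
def IsStable (M : Fin n ≃ Fin n) : Prop :=
  ∀ m w, ¬ I.Blocks M m w

/-- `M₁ ⪯ M₂` : every man weakly prefers his partner in `M₁` to his partner in `M₂`. -/
def Dominates (M₁ M₂ : Fin n ≃ Fin n) : Prop :=
  ∀ m, I.mrank m (M₁ m) ≤ I.mrank m (M₂ m)

/-- The man-optimal stable matching (the output of men-proposing Gale–Shapley):
stable and dominating every stable matching. -/
def IsManOptimal (M₀ : Fin n ≃ Fin n) : Prop :=
  I.IsStable M₀ ∧ ∀ M, I.IsStable M → I.Dominates M₀ M

/-- The woman-optimal (man-pessimal) stable matching. -/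
def IsWomanOptimal (Mz : Fin n ≃ Fin n) : Prop :=
  I.IsStable Mz ∧ ∀ M, I.IsStable M → I.Dominates M Mz

/-- `d(M, M')` : the number of men with different partners in `M` and `M'`. -/
def mdist (M M' : Fin n ≃ Fin n) : ℕ :=
  let _ := I
  (Finset.univ.filter fun m => M m ≠ M' m).card

/-- `L` is a rotation exposed in `M`: a cyclic list of at least two pairs `(mᵢ, wᵢ)` of `M`
with distinct men, such that `w_{i+1}` is the first woman strictly below `wᵢ` on `mᵢ`'s
list who prefers `mᵢ` to her `M`-partner. -/
def ExposedIn (M : Fin n ≃ Fin n) (L : List (Fin n × Fin n)) : Prop :=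
  2 ≤ L.length ∧ (L.map Prod.fst).Nodup ∧ (∀ p ∈ L, M p.1 = p.2) ∧
  ∀ i : Fin L.length,
    I.mrank (L.get i).1 (L.get i).2 <
      I.mrank (L.get i).1 (L.get ⟨(i.1 + 1) % L.length, Nat.mod_lt _ i.pos⟩).2 ∧
    I.wrank (L.get ⟨(i.1 + 1) % L.length, Nat.mod_lt _ i.pos⟩).2 (L.get i).1 <
      I.wrank (L.get ⟨(i.1 + 1) % L.length, Nat.mod_lt _ i.pos⟩).2
        (L.get ⟨(i.1 + 1) % L.length, Nat.mod_lt _ i.pos⟩).1 ∧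
    ∀ w, I.mrank (L.get i).1 (L.get i).2 < I.mrank (L.get i).1 w →
      I.mrank (L.get i).1 w <
        I.mrank (L.get i).1 (L.get ⟨(i.1 + 1) % L.length, Nat.mod_lt _ i.pos⟩).2 →
      ¬ I.wrank w (L.get i).1 < I.wrank w (M.symm w)

/-- `M'` is obtained from `M` by eliminating the rotation `L` exposed in `M`:
each man `mᵢ` of `L` moves to `w_{i+1}`, all other men keep their partners. -/
def Elim (M M' : Fin n ≃ Fin n) (L : List (Fin n × Fin n)) : Prop :=
  I.ExposedIn M L ∧
  (∀ i : Fin L.length,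
    M' (L.get i).1 = (L.get ⟨(i.1 + 1) % L.length, Nat.mod_lt _ i.pos⟩).2) ∧
  ∀ m : Fin n, m ∉ L.map Prod.fst → M' m = M m

/-- `ElimSeq M Ls M'` : applying the rotations of `Ls` in order starting from `M` yields `M'`. -/
def ElimSeq : (Fin n ≃ Fin n) → List (List (Fin n × Fin n)) → (Fin n ≃ Fin n) → Prop
  | M, [], M' => M' = M
  | M, L :: Ls, M' => ∃ Mmid, I.Elim M Mmid L ∧ ElimSeq Mmid Ls M'

/-- A rotation of the instance: a cyclic list exposed in some stable matching. -/
def IsRotation (L : List (Fin n × Fin n)) : Prop :=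
  ∃ M, I.IsStable M ∧ I.ExposedIn M L

/-- `ρ' ≪ ρ` : `ρ'` is eliminated in every sequence of rotation eliminations starting at
the man-optimal matching `M₀` and ending at a stable matching in which `ρ` is exposed.
(Rotations are identified up to their sets of pairs.) -/
def Precedes (L' L : List (Fin n × Fin n)) : Prop :=
  ∀ M₀ Ls M, I.IsManOptimal M₀ → I.ElimSeq M₀ Ls M → I.IsStable M → I.ExposedIn M L →
    ∃ K ∈ Ls, K.toFinset = L'.toFinset

/-- The rotation `L` produces the pair `(m, w)` : eliminating `L` matches `m` to `w`. -/
def Produces (L : List (Fin n × Fin n)) (m w : Fin n) : Prop :=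
  let _ := I
  ∃ i : Fin L.length,
    (L.get i).1 = m ∧ (L.get ⟨(i.1 + 1) % L.length, Nat.mod_lt _ i.pos⟩).2 = w

/-- The set of rotations of the instance, identified with their sets of pairs. -/
def RotSet : Set (Finset (Fin n × Fin n)) :=
  {R | ∃ L, I.IsRotation L ∧ L.toFinset = R}

/-- Precedence of rotations, on rotations-as-sets-of-pairs. -/
def PrecedesR (R' R : Finset (Fin n × Fin n)) : Prop :=
  ∃ L' L, I.IsRotation L' ∧ I.IsRotation L ∧ L'.toFinset = R' ∧ L.toFinset = R ∧
    I.Precedes L' L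

/-- Closed subsets (down-sets) of the rotation poset. -/
def IsClosedF (S : Finset (Finset (Fin n × Fin n))) : Prop :=
  (∀ R ∈ S, R ∈ I.RotSet) ∧ ∀ R ∈ S, ∀ R' ∈ I.RotSet, I.PrecedesR R' R → R' ∈ S

/-- `X(T)` : the set of men involved in at least one rotation of `T`. -/
def menOf (T : Finset (Finset (Fin n × Fin n))) : Finset (Fin n) :=
  let _ := I
  T.biUnion fun R => R.image Prod.fst

/-- The stable matching corresponding to the closed subset `S`: obtained from `M₀` by
eliminating the rotations of `S`, each exactly once, in some valid order. -/
def Corresponds (M₀ : Fin n ≃ Fin n) (S : Finset (Finset (Fin n × Fin n)))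
    (M : Fin n ≃ Fin n) : Prop :=
  ∃ Ls : List (List (Fin n × Fin n)),
    (Ls.map List.toFinset).Nodup ∧ (Ls.map List.toFinset).toFinset = S ∧
    I.ElimSeq M₀ Ls M

end SMInst
namespace SMInst

variable {n : ℕ} {I : SMInst n} {M M' N N' N₁ N₂ A B : Fin n ≃ Fin n}
  {L K J : List (Fin n × Fin n)} {m w : Fin n}

/-- successor index in a cyclic list -/
def sIdx (L : List (Fin n × Fin n)) (i : Fin L.length) : Fin L.length :=
  ⟨(i.1 + 1) % L.length, Nat.mod_lt _ i.pos⟩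

/-- predecessor index -/
def pIdx (L : List (Fin n × Fin n)) (i : Fin L.length) : Fin L.length :=
  ⟨(i.1 + L.length - 1) % L.length, Nat.mod_lt _ i.pos⟩

lemma sIdx_pIdx (L : List (Fin n × Fin n)) (i : Fin L.length) : sIdx L (pIdx L i) = i := by
  have hpos : 0 < L.length := i.pos
  have hi : i.1 < L.length := i.2
  apply Fin.ext
  show ((i.1 + L.length - 1) % L.length + 1) % L.length = i.1
  rw [Nat.mod_add_mod]
  have : i.1 + L.length - 1 + 1 = i.1 + L.length := by omega
  rw [this, Nat.add_mod_right, Nat.mod_eq_of_lt hi]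

lemma sIdx_sIdx_arith (L : List (Fin n × Fin n)) (j t : ℕ) (h : (j + t) % L.length < L.length) :
    sIdx L ⟨(j + t) % L.length, h⟩ = ⟨(j + (t+1)) % L.length, Nat.mod_lt _ (by omega)⟩ := by
  apply Fin.ext
  show ((j + t) % L.length + 1) % L.length = (j + (t+1)) % L.length
  rw [Nat.mod_add_mod, ← Nat.add_assoc]

/-- candidate: woman `w` is below `M m` on `m`'s list and prefers `m` to her partner -/
def Cand (I : SMInst n) (M : Fin n ≃ Fin n) (m w : Fin n) : Prop :=
  I.mrank m (M m) < I.mrank m w ∧ I.wrank w m < I.wrank w (M.symm w)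

namespace ExposedIn

lemma len (h : I.ExposedIn M L) : 2 ≤ L.length := h.1
lemma nodup_fst (h : I.ExposedIn M L) : (L.map Prod.fst).Nodup := h.2.1
lemma pair_mem (h : I.ExposedIn M L) {p : Fin n × Fin n} (hp : p ∈ L) : M p.1 = p.2 :=
  h.2.2.1 p hp
lemma pair_get (h : I.ExposedIn M L) (i : Fin L.length) : M (L.get i).1 = (L.get i).2 :=
  h.pair_mem (L.get_mem i)
lemma symm_get (h : I.ExposedIn M L) (i : Fin L.length) : M.symm (L.get i).2 = (L.get i).1 := by
  rw [← h.pair_get i, Equiv.symm_apply_apply]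

lemma cond (h : I.ExposedIn M L) (i : Fin L.length) :
    I.mrank (L.get i).1 (L.get i).2 < I.mrank (L.get i).1 (L.get (sIdx L i)).2 ∧
    I.wrank (L.get (sIdx L i)).2 (L.get i).1 <
      I.wrank (L.get (sIdx L i)).2 (L.get (sIdx L i)).1 ∧
    ∀ w, I.mrank (L.get i).1 (L.get i).2 < I.mrank (L.get i).1 w →
      I.mrank (L.get i).1 w < I.mrank (L.get i).1 (L.get (sIdx L i)).2 →
      ¬ I.wrank w (L.get i).1 < I.wrank w (M.symm w) := h.2.2.2 i

/-- the successor woman is a candidate -/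
lemma succ_cand (h : I.ExposedIn M L) (i : Fin L.length) :
    Cand I M (L.get i).1 (L.get (sIdx L i)).2 := by
  constructor
  · rw [h.pair_get i]; exact (h.cond i).1
  · rw [h.symm_get (sIdx L i)]; exact (h.cond i).2.1

/-- the successor woman is the best candidate -/
lemma succ_min (h : I.ExposedIn M L) (i : Fin L.length) {w : Fin n}
    (hc : Cand I M (L.get i).1 w) :
    I.mrank (L.get i).1 (L.get (sIdx L i)).2 ≤ I.mrank (L.get i).1 w := by
  by_contra hlt
  push_neg at hlt
  have h1 : I.mrank (L.get i).1 (L.get i).2 < I.mrank (L.get i).1 w := by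
    rw [← h.pair_get i]; exact hc.1
  exact (h.cond i).2.2 w h1 hlt hc.2

/-- two rotations exposed in the same matching, through the same man, have the same
successor woman -/
lemma succ_eq_same (hK : I.ExposedIn N K) (hL : I.ExposedIn N L)
    {j : Fin K.length} {i : Fin L.length} (hm : (K.get j).1 = (L.get i).1) :
    (K.get (sIdx K j)).2 = (L.get (sIdx L i)).2 := by
  have c1 := hK.succ_cand j
  have c2 := hL.succ_cand i
  rw [hm] at c1
  have h1 := hK.succ_min j (hm ▸ c2)
  have h2 := hL.succ_min i c1
  rw [hm] at h1
  exact I.mrank_inj _ (le_antisymm h1 h2)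

lemma fst_mem_iff : m ∈ L.map Prod.fst ↔ ∃ i : Fin L.length, (L.get i).1 = m := by
  simp only [List.mem_map]
  constructor
  · rintro ⟨p, hp, rfl⟩
    obtain ⟨i, rfl⟩ := List.mem_iff_get.mp hp
    exact ⟨i, rfl⟩
  · rintro ⟨i, rfl⟩
    exact ⟨L.get i, L.get_mem i, rfl⟩

lemma fst_mem_transfer (hKL : K.toFinset = L.toFinset) (hm : m ∈ L.map Prod.fst) :
    m ∈ K.map Prod.fst := by
  obtain ⟨i, rfl⟩ := fst_mem_iff.mp hm
  have : L.get i ∈ K.toFinset := by rw [hKL]; exact List.mem_toFinset.mpr (L.get_mem i)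
  obtain ⟨j, hj⟩ := List.mem_iff_get.mp (List.mem_toFinset.mp this)
  exact fst_mem_iff.mpr ⟨j, by rw [hj]⟩

/-- two rotations with the same pair set, exposed in (possibly different) matchings,
have the same successor woman through any common man -/
lemma succ_eq (hK : I.ExposedIn N K) (hL : I.ExposedIn N₂ L) (hKL : K.toFinset = L.toFinset)
    {j : Fin K.length} {i : Fin L.length} (hm : (K.get j).1 = (L.get i).1) :
    (K.get (sIdx K j)).2 = (L.get (sIdx L i)).2 := by
  -- membership transfers
  have memKL : ∀ p ∈ K, p ∈ L := fun p hp =>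
    List.mem_toFinset.mp (hKL ▸ List.mem_toFinset.mpr hp)
  have memLK : ∀ p ∈ L, p ∈ K := fun p hp =>
    List.mem_toFinset.mp (hKL.symm ▸ List.mem_toFinset.mpr hp)
  -- the pair women agree
  have hpw : (K.get j).2 = (L.get i).2 := by
    have h1 : N (K.get j).1 = (K.get j).2 := hK.pair_get j
    have h2 : N (L.get i).1 = (L.get i).2 := hK.pair_mem (memLK _ (L.get_mem i))
    rw [← h1, ← h2, hm]
  -- L's successor is a candidate for m in N
  have cL : Cand I N (K.get j).1 (L.get (sIdx L i)).2 := by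
    constructor
    · have := (hL.cond i).1
      rw [← hm] at this
      rw [hK.pair_get j, hpw]
      exact this
    · have hsymm : N.symm (L.get (sIdx L i)).2 = (L.get (sIdx L i)).1 := by
        have : N (L.get (sIdx L i)).1 = (L.get (sIdx L i)).2 :=
          hK.pair_mem (memLK _ (L.get_mem _))
        rw [← this, Equiv.symm_apply_apply]
      rw [hsymm, hm]
      exact (hL.cond i).2.1
    
  -- K's successor is a candidate for m in N₂
  have cK : Cand I N₂ (L.get i).1 (K.get (sIdx K j)).2 := by
    constructor
    · have := (hK.cond j).1
      rw [hm, hpw] at this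
      rw [hL.pair_get i]
      exact this
    · have hsymm : N₂.symm (K.get (sIdx K j)).2 = (K.get (sIdx K j)).1 := by
        have : N₂ (K.get (sIdx K j)).1 = (K.get (sIdx K j)).2 :=
          hL.pair_mem (memKL _ (K.get_mem _))
        rw [← this, Equiv.symm_apply_apply]
      rw [hsymm, ← hm]
      exact (hK.cond j).2.1
  have h1 : I.mrank (K.get j).1 (K.get (sIdx K j)).2 ≤ I.mrank (K.get j).1 (L.get (sIdx L i)).2 :=
    hK.succ_min j cL
  have h2 : I.mrank (L.get i).1 (L.get (sIdx L i)).2 ≤ I.mrank (L.get i).1 (K.get (sIdx K j)).2 :=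
    hL.succ_min i cK
  rw [hm] at h1
  exact I.mrank_inj _ (le_antisymm h1 h2)

end ExposedIn

end SMInst
namespace SMInst

variable {n : ℕ} {I : SMInst n} {M M' N N' N₁ N₂ A B : Fin n ≃ Fin n}
  {L K J : List (Fin n × Fin n)} {m w : Fin n}

open ExposedIn

namespace Elim

lemma exposed (e : I.Elim M M' L) : I.ExposedIn M L := e.1
lemma apply_get (e : I.Elim M M' L) (i : Fin L.length) :
    M' (L.get i).1 = (L.get (sIdx L i)).2 := e.2.1 i
lemma apply_of_not_mem (e : I.Elim M M' L) (hm : m ∉ L.map Prod.fst) : M' m = M m :=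
  e.2.2 m hm

lemma mrank_le (e : I.Elim M M' L) (m : Fin n) :
    I.mrank m (M m) ≤ I.mrank m (M' m) := by
  by_cases hm : m ∈ L.map Prod.fst
  · obtain ⟨i, rfl⟩ := fst_mem_iff.mp hm
    rw [e.apply_get i, e.exposed.pair_get i]
    exact le_of_lt (e.exposed.cond i).1
  · rw [e.apply_of_not_mem hm]

lemma mrank_lt (e : I.Elim M M' L) (hm : m ∈ L.map Prod.fst) :
    I.mrank m (M m) < I.mrank m (M' m) := by
  obtain ⟨i, rfl⟩ := fst_mem_iff.mp hm
  rw [e.apply_get i, e.exposed.pair_get i]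
  exact (e.exposed.cond i).1

lemma snd_mem_iff : w ∈ L.map Prod.snd ↔ ∃ i : Fin L.length, (L.get i).2 = w := by
  simp only [List.mem_map]
  constructor
  · rintro ⟨p, hp, rfl⟩
    obtain ⟨i, rfl⟩ := List.mem_iff_get.mp hp
    exact ⟨i, rfl⟩
  · rintro ⟨i, rfl⟩
    exact ⟨L.get i, L.get_mem i, rfl⟩

lemma symm_of_not_mem (e : I.Elim M M' L) (hw : w ∉ L.map Prod.snd) :
    M'.symm w = M.symm w := by
  have hfst : M.symm w ∉ L.map Prod.fst := by
    intro hmem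
    obtain ⟨i, hi⟩ := fst_mem_iff.mp hmem
    apply hw
    refine snd_mem_iff.mpr ⟨i, ?_⟩
    rw [← e.exposed.pair_get i, hi, Equiv.apply_symm_apply]
  have : M' (M.symm w) = w := by rw [e.apply_of_not_mem hfst, Equiv.apply_symm_apply]
  rw [Equiv.symm_apply_eq]
  exact this.symm

/-- women weakly improve when a rotation is eliminated -/
lemma wrank_le (e : I.Elim M M' L) (w : Fin n) :
    I.wrank w (M'.symm w) ≤ I.wrank w (M.symm w) := by
  by_cases hw : w ∈ L.map Prod.snd
  · obtain ⟨i, rfl⟩ := snd_mem_iff.mp hw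
    set j := pIdx L i with hj
    have hsj : sIdx L j = i := sIdx_pIdx L i
    have h1 : M' (L.get j).1 = (L.get i).2 := by rw [e.apply_get j, hsj]
    have hsymm : M'.symm (L.get i).2 = (L.get j).1 := by
      rw [← h1, Equiv.symm_apply_apply]
    rw [hsymm, e.exposed.symm_get i]
    have := (e.exposed.cond j).2.1
    rw [hsj] at this
    exact le_of_lt this
  · rw [e.symm_of_not_mem hw]

end Elim

/-- existence of the eliminated matching -/
lemma ExposedIn.elim (h : I.ExposedIn M L) : ∃ M', I.Elim M M' L := by
  classical
  have hsnd : L.map Prod.snd = (L.map Prod.fst).map M := by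
    rw [List.map_map]
    apply List.map_congr_left
    intro p hp
    exact (h.pair_mem hp).symm
  have hnodup : (L.map Prod.snd).Nodup := by
    rw [hsnd]; exact h.nodup_fst.map M.injective
  refine ⟨M.trans ((L.map Prod.snd).formPerm), ?_, ?_, ?_⟩
  · exact h
  · intro i
    show (L.map Prod.snd).formPerm (M (L.get i).1) = _
    rw [h.pair_get i]
    have hmem : (i.1) < (L.map Prod.snd).length := by simpa using i.2
    have := List.formPerm_apply_getElem (L.map Prod.snd) hnodup i.1 hmem
    simp only [List.length_map] at this
    have e1 : (L.map Prod.snd)[(i.1 : ℕ)]'(by simpa using i.2) = (L.get i).2 := by simp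
    have e2 : (L.map Prod.snd)[(i.1 + 1) % L.length]'(by simpa using Nat.mod_lt _ i.pos) =
        (L.get ⟨(i.1 + 1) % L.length, Nat.mod_lt _ i.pos⟩).2 := by simp
    rw [e1, e2] at this
    exact this
  · intro m hm
    show (L.map Prod.snd).formPerm (M m) = M m
    apply List.formPerm_apply_of_notMem
    intro hmem
    obtain ⟨i, hi⟩ := Elim.snd_mem_iff.mp hmem
    apply hm
    refine ExposedIn.fst_mem_iff.mpr ⟨i, ?_⟩
    have := h.pair_get i
    rw [hi] at this
    exact M.injective this

/-- the eliminated matching is unique -/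
lemma Elim.unique (e : I.Elim M A L) (e' : I.Elim M B L) : A = B := by
  apply Equiv.ext
  intro m
  by_cases hm : m ∈ L.map Prod.fst
  · obtain ⟨i, rfl⟩ := ExposedIn.fst_mem_iff.mp hm
    rw [e.apply_get i, e'.apply_get i]
  · rw [e.apply_of_not_mem hm, e'.apply_of_not_mem hm]

end SMInst
namespace SMInst

variable {n : ℕ} {I : SMInst n} {M M' N N' N₁ N₂ A B : Fin n ≃ Fin n}
  {L K J : List (Fin n × Fin n)} {m w : Fin n}

open ExposedIn

/-- two rotations exposed in the same matching sharing a man have equal pair sets -/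
lemma ExposedIn.toFinset_eq_of_shared (hK : I.ExposedIn N K) (hL : I.ExposedIn N L)
    (hmK : m ∈ K.map Prod.fst) (hmL : m ∈ L.map Prod.fst) : K.toFinset = L.toFinset := by
  obtain ⟨j₀, hj₀⟩ := fst_mem_iff.mp hmK
  obtain ⟨i₀, hi₀⟩ := fst_mem_iff.mp hmL
  have hKpos : 0 < K.length := j₀.pos
  have hLpos : 0 < L.length := i₀.pos
  -- the two cyclic traversals agree
  have key : ∀ t : ℕ, K.get ⟨(j₀.1 + t) % K.length, Nat.mod_lt _ hKpos⟩ =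
      L.get ⟨(i₀.1 + t) % L.length, Nat.mod_lt _ hLpos⟩ := by
    intro t
    induction t with
    | zero =>
      simp only [Nat.add_zero, Nat.mod_eq_of_lt j₀.2, Nat.mod_eq_of_lt i₀.2]
      have hfst : (K.get ⟨j₀.1, j₀.2⟩).1 = (L.get ⟨i₀.1, i₀.2⟩).1 := by
        simp only [Fin.eta]; rw [hj₀, hi₀]
      have hsnd : (K.get ⟨j₀.1, j₀.2⟩).2 = (L.get ⟨i₀.1, i₀.2⟩).2 := by
        rw [← hK.pair_get, ← hL.pair_get, hfst]
      exact Prod.ext hfst hsnd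
    | succ t ih =>
      set jt : Fin K.length := ⟨(j₀.1 + t) % K.length, Nat.mod_lt _ hKpos⟩
      set it : Fin L.length := ⟨(i₀.1 + t) % L.length, Nat.mod_lt _ hLpos⟩
      have hfst : (K.get jt).1 = (L.get it).1 := by rw [ih]
      have hsucc2 : (K.get (sIdx K jt)).2 = (L.get (sIdx L it)).2 :=
        succ_eq_same hK hL hfst
      have hsucc1 : (K.get (sIdx K jt)).1 = (L.get (sIdx L it)).1 := by
        have h1 := hK.symm_get (sIdx K jt)
        have h2 := hL.symm_get (sIdx L it)
        rw [← h1, ← h2, hsucc2]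
      have hs1 : sIdx K jt = ⟨(j₀.1 + (t+1)) % K.length, Nat.mod_lt _ hKpos⟩ :=
        sIdx_sIdx_arith K j₀.1 t _
      have hs2 : sIdx L it = ⟨(i₀.1 + (t+1)) % L.length, Nat.mod_lt _ hLpos⟩ :=
        sIdx_sIdx_arith L i₀.1 t _
      rw [hs1] at hsucc1 hsucc2
      rw [hs2] at hsucc1 hsucc2
      exact Prod.ext hsucc1 hsucc2
  -- now prove both inclusions
  apply Finset.Subset.antisymm
  · intro p hp
    obtain ⟨j, hj⟩ := List.mem_iff_get.mp (List.mem_toFinset.mp hp)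
    have ht : (j₀.1 + (K.length - j₀.1 + j.1)) % K.length = j.1 := by
      have : j₀.1 + (K.length - j₀.1 + j.1) = K.length + j.1 := by omega
      rw [this, Nat.add_mod_left, Nat.mod_eq_of_lt j.2]
    have := key (K.length - j₀.1 + j.1)
    rw [List.mem_toFinset]
    have hKj : K.get ⟨(j₀.1 + (K.length - j₀.1 + j.1)) % K.length, Nat.mod_lt _ hKpos⟩ = p := by
      rw [← hj]; congr 1; exact Fin.ext ht
    rw [hKj] at this
    rw [this]
    exact L.get_mem _
  · intro p hp
    obtain ⟨i, hi⟩ := List.mem_iff_get.mp (List.mem_toFinset.mp hp)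
    have ht : (i₀.1 + (L.length - i₀.1 + i.1)) % L.length = i.1 := by
      have : i₀.1 + (L.length - i₀.1 + i.1) = L.length + i.1 := by omega
      rw [this, Nat.add_mod_left, Nat.mod_eq_of_lt i.2]
    have := key (L.length - i₀.1 + i.1)
    rw [List.mem_toFinset]
    have hLi : L.get ⟨(i₀.1 + (L.length - i₀.1 + i.1)) % L.length, Nat.mod_lt _ hLpos⟩ = p := by
      rw [← hi]; congr 1; exact Fin.ext ht
    rw [hLi] at this
    rw [← this]
    exact K.get_mem _

/-- distinct rotations exposed in the same matching are disjoint on men -/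
lemma ExposedIn.disjoint_fst (hK : I.ExposedIn N K) (hL : I.ExposedIn N L)
    (hne : K.toFinset ≠ L.toFinset) (hmL : m ∈ L.map Prod.fst) : m ∉ K.map Prod.fst :=
  fun hmK => hne (hK.toFinset_eq_of_shared hL hmK hmL)

/-- eliminating a different rotation preserves exposedness -/
lemma Elim.preserves (e : I.Elim N N' K) (hL : I.ExposedIn N L)
    (hne : K.toFinset ≠ L.toFinset) : I.ExposedIn N' L := by
  have hdisj : ∀ m ∈ L.map Prod.fst, m ∉ K.map Prod.fst :=
    fun m hm => e.exposed.disjoint_fst hL hne hm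
  refine ⟨hL.len, hL.nodup_fst, ?_, ?_⟩
  · intro p hp
    have : p.1 ∈ L.map Prod.fst := List.mem_map.mpr ⟨p, hp, rfl⟩
    rw [e.apply_of_not_mem (hdisj _ this)]
    exact hL.pair_mem hp
  · intro i
    refine ⟨(hL.cond i).1, (hL.cond i).2.1, ?_⟩
    intro w h1 h2 hw
    have hle := e.wrank_le w
    have := (hL.cond i).2.2 w h1 h2
    exact this (lt_of_lt_of_le hw hle)

/-- eliminating an exposed rotation from a stable matching yields a stable matching -/
lemma Elim.stable (hN : I.IsStable N) (e : I.Elim N N' L) : I.IsStable N' := by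
  rintro m w ⟨h1, h2⟩
  have hw2 : I.wrank w m < I.wrank w (N.symm w) := lt_of_lt_of_le h2 (e.wrank_le w)
  by_cases hm : m ∈ L.map Prod.fst
  · obtain ⟨i, rfl⟩ := fst_mem_iff.mp hm
    rw [e.apply_get i] at h1
    rcases lt_trichotomy (I.mrank (L.get i).1 w) (I.mrank (L.get i).1 (L.get i).2) with hlt | heq | hgt
    · refine hN (L.get i).1 w ⟨?_, hw2⟩
      rw [e.exposed.pair_get i]
      exact hlt
    · have hweq : w = (L.get i).2 := I.mrank_inj _ heq
      have hsymm : N'.symm (L.get i).2 = (L.get (pIdx L i)).1 := by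
        rw [Equiv.symm_apply_eq, e.apply_get (pIdx L i), sIdx_pIdx]
      rw [hweq, hsymm] at h2
      have hcond := (e.exposed.cond (pIdx L i)).2.1
      rw [sIdx_pIdx] at hcond
      exact lt_irrefl _ (h2.trans hcond)
    · exact (e.exposed.cond i).2.2 w hgt h1 hw2
  · rw [e.apply_of_not_mem hm] at h1
    exact hN m w ⟨h1, hw2⟩

end SMInst
namespace SMInst

variable {n : ℕ} {I : SMInst n} {M M' N N' N₁ N₂ A B : Fin n ≃ Fin n}
  {L K J : List (Fin n × Fin n)} {Ls Ls' π π' : List (List (Fin n × Fin n))} {m w : Fin n}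

open ExposedIn

lemma ElimSeq.nil_iff : I.ElimSeq N [] M ↔ M = N := Iff.rfl

lemma ElimSeq.append (h1 : I.ElimSeq N Ls A) (h2 : I.ElimSeq A Ls' M) :
    I.ElimSeq N (Ls ++ Ls') M := by
  induction Ls generalizing N with
  | nil => rw [show A = N from h1] at h2; exact h2
  | cons K t ih =>
    obtain ⟨Mmid, hK, ht⟩ := h1
    exact ⟨Mmid, hK, ih ht⟩

lemma ElimSeq.dominates (h : I.ElimSeq N Ls M) : I.Dominates N M := by
  induction Ls generalizing N with
  | nil => rw [show M = N from h]; exact fun m => le_refl _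
  | cons K t ih =>
    obtain ⟨Mmid, hK, ht⟩ := h
    exact fun m => (hK.mrank_le m).trans (ih ht m)

lemma ElimSeq.stable (hN : I.IsStable N) (h : I.ElimSeq N Ls M) : I.IsStable M := by
  induction Ls generalizing N with
  | nil => rw [show M = N from h]; exact hN
  | cons K t ih =>
    obtain ⟨Mmid, hK, ht⟩ := h
    exact ih (hK.stable hN) ht

/-- decomposition of a sequence at a member -/
lemma ElimSeq.decomp (h : I.ElimSeq N Ls M) (hK : K ∈ Ls) :
    ∃ (Ls₁ Ls₂ : List (List (Fin n × Fin n))) (N₁ N₂ : Fin n ≃ Fin n),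
      Ls = Ls₁ ++ K :: Ls₂ ∧ I.ElimSeq N Ls₁ N₁ ∧ I.Elim N₁ N₂ K ∧ I.ElimSeq N₂ Ls₂ M := by
  induction Ls generalizing N with
  | nil => cases hK
  | cons J t ih =>
    obtain ⟨Mmid, hJ, ht⟩ := h
    rcases List.mem_cons.mp hK with rfl | hKt
    · exact ⟨[], t, N, Mmid, rfl, rfl, hJ, ht⟩
    · obtain ⟨Ls₁, Ls₂, N₁, N₂, rfl, hseq, helim, hrest⟩ := ih ht hKt
      exact ⟨J :: Ls₁, Ls₂, N₁, N₂, rfl, ⟨Mmid, hJ, hseq⟩, helim, hrest⟩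

lemma ElimSeq.mem_exposed (h : I.ElimSeq N Ls M) (hK : K ∈ Ls) :
    ∃ N₁, I.ExposedIn N₁ K := by
  obtain ⟨_, _, N₁, _, _, _, helim, _⟩ := h.decomp hK
  exact ⟨N₁, helim.exposed⟩

/-- once a rotation is eliminated, its pairs can never be matched again -/
lemma ElimSeq.not_pair_again (e : I.Elim N N₁ L) (h : I.ElimSeq N₁ Ls M)
    {p : Fin n × Fin n} (hp : p ∈ L) (hM : M p.1 = p.2) : False := by
  have h1 : I.mrank p.1 (N p.1) < I.mrank p.1 (N₁ p.1) :=
    e.mrank_lt (List.mem_map.mpr ⟨p, hp, rfl⟩)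
  have h2 : I.mrank p.1 (N₁ p.1) ≤ I.mrank p.1 (M p.1) := h.dominates p.1
  have h3 : N p.1 = p.2 := e.exposed.pair_mem hp
  rw [h3] at h1
  rw [hM] at h2
  omega

/-- no rotation (as a set) is eliminated twice in a sequence -/
lemma ElimSeq.nodup_sets (h : I.ElimSeq N Ls M) : (Ls.map List.toFinset).Nodup := by
  induction Ls generalizing N with
  | nil => exact List.nodup_nil
  | cons K t ih =>
    obtain ⟨Mmid, hK, ht⟩ := h
    refine List.Nodup.cons ?_ (ih ht)
    intro hmem
    obtain ⟨K', hK't, hKK'⟩ := List.mem_map.mp hmem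
    obtain ⟨Ls₁, Ls₂, N₁, N₂, rfl, hseq, helim, _⟩ := ht.decomp hK't
    have hlen : 0 < K.length := lt_of_lt_of_le (by norm_num) hK.exposed.len
    set p := K.get ⟨0, hlen⟩ with hp
    have hpK : p ∈ K := K.get_mem _
    have hpK' : p ∈ K' := by
      rw [← List.mem_toFinset, hKK', List.mem_toFinset]; exact hpK
    have hpair : N₁ p.1 = p.2 := helim.exposed.pair_mem hpK'
    exact ElimSeq.not_pair_again hK hseq hpK hpair

/-- a rotation exposed at the end of a sequence cannot occur in the sequence -/
lemma ElimSeq.not_mem_of_exposed_end (h : I.ElimSeq N Ls M) (hK : K ∈ Ls)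
    (hL : I.ExposedIn M L) (hKL : K.toFinset = L.toFinset) : False := by
  obtain ⟨Ls₁, Ls₂, N₁, N₂, rfl, hseq, helim, hrest⟩ := h.decomp hK
  have hlen : 0 < K.length := lt_of_lt_of_le (by norm_num) helim.exposed.len
  set p := K.get ⟨0, hlen⟩ with hp
  have hpK : p ∈ K := K.get_mem _
  have hpL : p ∈ L := by rw [← List.mem_toFinset, ← hKL, List.mem_toFinset]; exact hpK
  exact ElimSeq.not_pair_again helim hrest hpK (hL.pair_mem hpL)

/-- exposedness is preserved along a sequence avoiding the rotation -/
lemma ElimSeq.preserves (h : I.ElimSeq N Ls M) (hL : I.ExposedIn N L)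
    (hav : ∀ J ∈ Ls, J.toFinset ≠ L.toFinset) : I.ExposedIn M L := by
  induction Ls generalizing N with
  | nil => rw [show M = N from h]; exact hL
  | cons K t ih =>
    obtain ⟨Mmid, hK, ht⟩ := h
    exact ih ht (hK.preserves hL (hav K (List.mem_cons_self))) fun J hJ => hav J (List.mem_cons_of_mem _ hJ)

/-- the man-sum measure -/
def msum (I : SMInst n) (M : Fin n ≃ Fin n) : ℕ := ∑ m, I.mrank m (M m)

lemma Elim.msum_lt (e : I.Elim N N' L) : I.msum N < I.msum N' := by
  have hlen : 0 < L.length := lt_of_lt_of_le (by norm_num) e.exposed.len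
  have hm : (L.get ⟨0, hlen⟩).1 ∈ L.map Prod.fst :=
    List.mem_map.mpr ⟨L.get ⟨0, hlen⟩, L.get_mem _, rfl⟩
  exact Finset.sum_lt_sum (fun m _ => e.mrank_le m)
    ⟨(L.get ⟨0, hlen⟩).1, Finset.mem_univ _, e.mrank_lt hm⟩

lemma ElimSeq.msum_le (h : I.ElimSeq N Ls M) : I.msum N ≤ I.msum M :=
  Finset.sum_le_sum fun m _ => h.dominates m

lemma ElimSeq.eq_nil_of_self (h : I.ElimSeq N Ls N) : Ls = [] := by
  cases Ls with
  | nil => rfl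
  | cons K t =>
    obtain ⟨Mmid, hK, ht⟩ := h
    exact absurd (lt_of_lt_of_le hK.msum_lt ht.msum_le) (lt_irrefl _)

end SMInst
namespace SMInst

variable {n : ℕ} {I : SMInst n} {M M' N N' N₁ N₂ A B C : Fin n ≃ Fin n}
  {L K J : List (Fin n × Fin n)} {Ls Ls' π π' : List (List (Fin n × Fin n))} {m w : Fin n}

open ExposedIn

/-- commuting square for disjoint rotations -/
lemma Elim.diamond (eK : I.Elim N N₁ K) (eJ : I.Elim N A J)
    (hne : J.toFinset ≠ K.toFinset) {C : Fin n ≃ Fin n} (eJC : I.Elim N₁ C J) :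
    I.Elim A C K := by
  have hKA : I.ExposedIn A K := eJ.preserves eK.exposed (by exact hne)
  refine ⟨hKA, ?_, ?_⟩
  · intro i
    have hmK : (K.get i).1 ∈ K.map Prod.fst := List.mem_map.mpr ⟨_, K.get_mem _, rfl⟩
    have hmJ : (K.get i).1 ∉ J.map Prod.fst :=
      eJ.exposed.disjoint_fst eK.exposed hne hmK
    rw [eJC.apply_of_not_mem hmJ]
    exact eK.apply_get i
  · intro m hm
    by_cases hmJ : m ∈ J.map Prod.fst
    · obtain ⟨i, rfl⟩ := fst_mem_iff.mp hmJ
      rw [eJC.apply_get i, eJ.apply_get i]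
    · rw [eJC.apply_of_not_mem hmJ, eK.apply_of_not_mem hm, eJ.apply_of_not_mem hmJ]

/-- a rotation exposed at the start and occurring in a sequence can be moved to the front -/
lemma ElimSeq.swap_front (h : I.ElimSeq N π M) (hK : I.ExposedIn N K)
    (eK : I.Elim N N₁ K) (hmem : K.toFinset ∈ π.map List.toFinset) :
    ∃ π₂, I.ElimSeq N₁ π₂ M ∧ (π.map List.toFinset).Perm (K.toFinset :: π₂.map List.toFinset) := by
  induction π generalizing N N₁ with
  | nil => simp at hmem
  | cons J rest ih =>
    obtain ⟨A, eJ, hrest⟩ := h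
    by_cases hJK : J.toFinset = K.toFinset
    · have : N₁ = A := by
        -- eliminating J and K from N gives the same result
        have eK' : I.Elim N A K := by
          have hKexp : I.ExposedIn N K := hK
          -- A is the result of eliminating J; since J.set = K.set, it's also elim of K
          refine ⟨hKexp, ?_, ?_⟩
          · intro i
            have hmemKJ : ∀ p ∈ K, p ∈ J := fun p hp =>
              List.mem_toFinset.mp (hJK ▸ List.mem_toFinset.mpr hp)
            obtain ⟨j, hj⟩ := List.mem_iff_get.mp (hmemKJ _ (K.get_mem i))
            have hfst : (J.get j).1 = (K.get i).1 := by rw [hj]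
            rw [← hfst, eJ.apply_get j]
            exact ExposedIn.succ_eq eJ.exposed hKexp hJK hfst
          · intro m hm
            refine eJ.apply_of_not_mem fun hmJ => hm (fst_mem_transfer ?_ hmJ)
            exact hJK ▸ rfl
        exact eK.unique eK'
      subst this
      exact ⟨rest, hrest, by simp [hJK]⟩
    · have hmem' : K.toFinset ∈ rest.map List.toFinset := by
        rcases List.mem_map.mp hmem with ⟨X, hX, hXK⟩
        rcases List.mem_cons.mp hX with rfl | hXrest
        · exact absurd hXK hJK
        · exact List.mem_map.mpr ⟨X, hXrest, hXK⟩
      have hKA : I.ExposedIn A K := eJ.preserves hK fun h => hJK h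
      obtain ⟨B', eKB⟩ := hKA.elim
      obtain ⟨π₃, hπ₃, hperm⟩ := ih hrest hKA eKB hmem'
      -- diamond: eliminate J from N₁
      have hJN₁ : I.ExposedIn N₁ J := eK.preserves eJ.exposed fun h => hJK h.symm
      obtain ⟨C, eJC⟩ := hJN₁.elim
      have eAC : I.Elim A C K := Elim.diamond eK eJ hJK eJC
      have hCB : C = B' := eAC.unique eKB
      subst hCB
      have p1 : (List.map List.toFinset (J :: rest)).Perm
          (J.toFinset :: K.toFinset :: π₃.map List.toFinset) := hperm.cons _
      have p2 : (J.toFinset :: K.toFinset :: π₃.map List.toFinset).Perm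
          (K.toFinset :: J.toFinset :: π₃.map List.toFinset) := List.Perm.swap _ _ _
      exact ⟨J :: π₃, ⟨C, eJC, hπ₃⟩, p1.trans p2⟩

/-- uniqueness of rotation sets: any two sequences between the same matchings use the
same rotations -/
lemma ElimSeq.perm_sets (h : I.ElimSeq N π M) (h' : I.ElimSeq N π' M) :
    (π.map List.toFinset).Perm (π'.map List.toFinset) := by
  induction π generalizing N π' with
  | nil =>
    rw [show M = N from h] at h'
    rw [h'.eq_nil_of_self]
  | cons K t ih =>
    obtain ⟨N₁, eK, ht⟩ := h
    have hmem : K.toFinset ∈ π'.map List.toFinset := by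
      by_contra hno
      have hexp : I.ExposedIn M K :=
        h'.preserves eK.exposed fun J hJ hJK => hno (hJK ▸ List.mem_map.mpr ⟨J, hJ, rfl⟩)
      have hlen : 0 < K.length := lt_of_lt_of_le (by norm_num) eK.exposed.len
      have hp := K.get_mem ⟨0, hlen⟩
      exact ElimSeq.not_pair_again eK ht hp (hexp.pair_mem hp)
    obtain ⟨π₂, hπ₂, hperm⟩ := h'.swap_front eK.exposed eK hmem
    have h1 : (List.map List.toFinset (K :: t)).Perm
        (K.toFinset :: π₂.map List.toFinset) := (ih ht hπ₂).cons _
    exact h1.trans hperm.symm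

end SMInst
namespace SMInst

variable {n : ℕ} {I : SMInst n} {M M' N N' N₁ N₂ A B C : Fin n ≃ Fin n}
  {L K J : List (Fin n × Fin n)} {Ls Ls' π π' : List (List (Fin n × Fin n))} {m w : Fin n}

open ExposedIn

/-- the key step: between distinct comparable stable matchings there is an exposed rotation
whose elimination stays below the upper one -/
lemma exists_step (hN : I.IsStable N) (hM' : I.IsStable M') (hdom : I.Dominates N M')
    (hne : N ≠ M') :
    ∃ L N₁, I.Elim N N₁ L ∧ I.Dominates N₁ M' := by
  classical
  -- every man who differs has a candidate, in particular M' m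
  have hcand : ∀ m, N m ≠ M' m → Cand I N m (M' m) := by
    intro m hm
    have hlt : I.mrank m (N m) < I.mrank m (M' m) :=
      lt_of_le_of_ne (hdom m) (fun h => hm (I.mrank_inj m h))
    refine ⟨hlt, ?_⟩
    set w := M' m with hw
    set a := N.symm w with ha
    have haw : N a = w := N.apply_symm_apply w
    have ham : a ≠ m := fun h => hm (by rw [← h, haw])
    by_contra hcon
    push_neg at hcon
    have hne2 : I.wrank w a ≠ I.wrank w m := fun h => ham (I.wrank_inj w h)
    have hwa : I.wrank w a < I.wrank w m := lt_of_le_of_ne hcon hne2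
    -- (a, w) blocks M'
    refine hM' a w ⟨?_, ?_⟩
    · have h1 : I.mrank a (N a) ≤ I.mrank a (M' a) := hdom a
      rw [haw] at h1
      rcases lt_or_eq_of_le h1 with h | h
      · exact h
      · exfalso
        have h2 : w = M' a := I.mrank_inj a h
        have h3 : a = m := M'.injective (by rw [← h2, hw])
        exact ham h3
    · have : M'.symm w = m := by rw [hw, Equiv.symm_apply_apply]
      rw [this]
      exact hwa
  -- choose the best candidate for each differing man
  have hsel : ∀ m, ∃ wm, N m ≠ M' m →
      Cand I N m wm ∧ (∀ w', Cand I N m w' → I.mrank m wm ≤ I.mrank m w') ∧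
      I.mrank m wm ≤ I.mrank m (M' m) := by
    intro m
    by_cases hm : N m ≠ M' m
    · obtain ⟨wm, hwm, hmin⟩ := Finset.exists_min_image
        (Finset.univ.filter (fun w => Cand I N m w)) (I.mrank m)
        ⟨M' m, Finset.mem_filter.mpr ⟨Finset.mem_univ _, hcand m hm⟩⟩
      refine ⟨wm, fun _ => ⟨(Finset.mem_filter.mp hwm).2, ?_, ?_⟩⟩
      · exact fun w' hw' => hmin w' (Finset.mem_filter.mpr ⟨Finset.mem_univ _, hw'⟩)
      · exact hmin (M' m) (Finset.mem_filter.mpr ⟨Finset.mem_univ _, hcand m hm⟩)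
    · exact ⟨m, fun h => absurd h hm⟩
  choose nxt hnxt using hsel
  set f : Fin n → Fin n := fun m => N.symm (nxt m) with hf
  -- D is closed under f
  have hDf : ∀ m, N m ≠ M' m → N (f m) ≠ M' (f m) := by
    intro m hm hcon
    obtain ⟨hc, hmin, hle⟩ := hnxt m hm
    have hfw : N (f m) = nxt m := N.apply_symm_apply _
    have hM'f : M' (f m) = nxt m := by rw [← hcon, hfw]
    by_cases hwm : nxt m = M' m
    · have hfm : f m = m := M'.injective (by rw [hM'f, hwm])
      rw [hfm] at hfw
      have hlt := hc.1
      rw [← hfw] at hlt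
      exact lt_irrefl _ hlt
    · have hlt : I.mrank m (nxt m) < I.mrank m (M' m) :=
        lt_of_le_of_ne hle (fun h => hwm (I.mrank_inj m h))
      refine hM' m (nxt m) ⟨hlt, ?_⟩
      have hsym : M'.symm (nxt m) = f m := by rw [← hM'f, Equiv.symm_apply_apply]
      rw [hsym]
      exact hc.2
  -- find a starting point
  have hne' : ∃ m₀, N m₀ ≠ M' m₀ := by
    by_contra hcon
    push_neg at hcon
    exact hne (Equiv.ext hcon)
  obtain ⟨m₀, hm₀⟩ := hne'
  have hiter : ∀ t, N (f^[t] m₀) ≠ M' (f^[t] m₀) := by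
    intro t
    induction t with
    | zero => exact hm₀
    | succ t ih => rw [Function.iterate_succ_apply']; exact hDf _ ih
  -- pigeonhole: get a periodic point
  obtain ⟨i, j, hij, hfij⟩ : ∃ i j : ℕ, i ≠ j ∧ f^[i] m₀ = f^[j] m₀ := by
    obtain ⟨i, j, hij, h⟩ := Finite.exists_ne_map_eq_of_infinite (fun t : ℕ => f^[t] m₀)
    exact ⟨i, j, hij, h⟩
  wlog hij' : i < j generalizing i j
  · exact this j i hij.symm hfij.symm (by omega)
  set a₀ := f^[i] m₀ with ha₀
  have hper : f^[j - i] a₀ = a₀ := by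
    have h1 : f^[j - i] (f^[i] m₀) = f^[j] m₀ := by
      rw [← Function.iterate_add_apply]
      congr 1
      omega
    rw [ha₀, h1, ← hfij]
  have hexists : ∃ k, 0 < k ∧ f^[k] a₀ = a₀ := ⟨j - i, by omega, hper⟩
  set k := Nat.find hexists with hk
  obtain ⟨hkpos, hka⟩ := Nat.find_spec hexists
  rw [← hk] at hkpos hka
  have hkmin : ∀ k' , 0 < k' → f^[k'] a₀ = a₀ → k ≤ k' := fun k' h1 h2 =>
    Nat.find_le ⟨h1, h2⟩
  have haD : ∀ t, N (f^[t] a₀) ≠ M' (f^[t] a₀) := by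
    intro t
    rw [ha₀, ← Function.iterate_add_apply]
    exact hiter _
  -- k ≥ 2
  have hk2 : 2 ≤ k := by
    by_contra h
    push_neg at h
    have hk1 : k = 1 := by omega
    have h1 : f a₀ = a₀ := by
      rw [← Function.iterate_one f, ← hk1]
      exact hka
    have h2 : N (f a₀) = nxt a₀ := N.apply_symm_apply _
    rw [h1] at h2
    have hlt := (hnxt a₀ (haD 0)).1.1
    rw [← h2] at hlt
    exact lt_irrefl _ hlt
  -- injectivity of iterates below k
  have hinj : ∀ s t, s < t → t < k → f^[s] a₀ ≠ f^[t] a₀ := by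
    intro s t hst htk hcon
    have h1 : f^[k - t] (f^[t] a₀) = a₀ := by
      rw [← Function.iterate_add_apply]
      have : k - t + t = k := by omega
      rw [this, hka]
    rw [← hcon] at h1
    have h2 : f^[k - t + s] a₀ = a₀ := by
      rw [Function.iterate_add_apply]
      exact h1
    have := hkmin (k - t + s) (by omega) h2
    omega
  -- build the cycle
  set Lc : List (Fin n × Fin n) :=
    (List.range k).map (fun t => (f^[t] a₀, N (f^[t] a₀))) with hLc
  have hLclen : Lc.length = k := by simp [hLc]
  have hget : ∀ (t : ℕ) (ht : t < Lc.length),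
      Lc.get ⟨t, ht⟩ = (f^[t] a₀, N (f^[t] a₀)) := by
    intro t ht
    simp [hLc]
  have hfst : ∀ (i : Fin Lc.length), (Lc.get i).1 = f^[i.1] a₀ := by
    intro i
    rw [hget i.1 i.2]
  have hsnd : ∀ (i : Fin Lc.length), (Lc.get i).2 = N (f^[i.1] a₀) := by
    intro i
    rw [hget i.1 i.2]
  -- successor woman is nxt
  have hsucc : ∀ (i : Fin Lc.length), (Lc.get (sIdx Lc i)).2 = nxt (f^[i.1] a₀) := by
    intro i
    have hi2 := i.2
    have hval : Lc.get (sIdx Lc i) =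
        (f^[(i.1 + 1) % Lc.length] a₀, N (f^[(i.1 + 1) % Lc.length] a₀)) :=
      hget ((i.1 + 1) % Lc.length) (sIdx Lc i).2
    rw [hval]
    show N (f^[(i.1 + 1) % Lc.length] a₀) = _
    rcases Nat.lt_or_ge (i.1 + 1) Lc.length with h | h
    · rw [Nat.mod_eq_of_lt h, Function.iterate_succ_apply']
      exact N.apply_symm_apply _
    · have hieq : i.1 + 1 = Lc.length := by omega
      rw [hieq, Nat.mod_self]
      show N a₀ = _
      have hka' : f^[Lc.length] a₀ = a₀ := by rw [hLclen]; exact hka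
      have he : Lc.length - 1 + 1 = Lc.length := by omega
      have h5 : f^[Lc.length - 1 + 1] a₀ = a₀ := by rw [he]; exact hka'
      have hstep : f (f^[Lc.length - 1] a₀) = a₀ :=
        (Function.iterate_succ_apply' f (Lc.length - 1) a₀).symm.trans h5
      have hfin : N (f (f^[Lc.length - 1] a₀)) = nxt (f^[Lc.length - 1] a₀) :=
        N.apply_symm_apply _
      rw [hstep] at hfin
      have hieq' : i.1 = Lc.length - 1 := by omega
      rw [hieq']
      exact hfin
  -- exposedness
  have hexp : I.ExposedIn N Lc := by
    refine ⟨by rw [hLclen]; exact hk2, ?_, ?_, ?_⟩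
    · -- nodup of men
      have hmm : Lc.map Prod.fst = (List.range k).map (fun t => f^[t] a₀) := by
        rw [hLc, List.map_map]
        rfl
      rw [hmm]
      refine List.Nodup.map_on ?_ (List.nodup_range)
      intro s hs t ht hst
      rcases lt_trichotomy s t with h | h | h
      · exact absurd hst (hinj s t h (List.mem_range.mp ht))
      · exact h
      · exact absurd hst.symm (hinj t s h (List.mem_range.mp hs))
    · intro p hp
      obtain ⟨i, rfl⟩ := List.mem_iff_get.mp hp
      rw [hfst i, hsnd i]
    · intro i
      have hiD := haD i.1
      obtain ⟨hc, hmin, hle⟩ := hnxt _ hiD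
      refine ⟨?_, ?_, ?_⟩
      · show I.mrank (Lc.get i).1 (Lc.get i).2 <
            I.mrank (Lc.get i).1 (Lc.get (sIdx Lc i)).2
        rw [hfst i, hsnd i, hsucc i]
        exact hc.1
      · show I.wrank (Lc.get (sIdx Lc i)).2 (Lc.get i).1 <
            I.wrank (Lc.get (sIdx Lc i)).2 (Lc.get (sIdx Lc i)).1
        rw [hfst i, hsucc i, hfst (sIdx Lc i)]
        have heq : f^[(sIdx Lc i).1] a₀ = N.symm (nxt (f^[i.1] a₀)) := by
          have h1 := hsnd (sIdx Lc i)
          have h2 := hsucc i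
          rw [h1] at h2
          rw [← h2, Equiv.symm_apply_apply]
        rw [heq]
        exact hc.2
      · intro w h1 h2 hw
        have h1' : I.mrank (Lc.get i).1 (Lc.get i).2 < I.mrank (Lc.get i).1 w := h1
        have h2' : I.mrank (Lc.get i).1 w <
            I.mrank (Lc.get i).1 (Lc.get (sIdx Lc i)).2 := h2
        rw [hfst i, hsnd i] at h1'
        rw [hfst i, hsucc i] at h2'
        rw [hfst i] at hw
        exact absurd (hmin w ⟨h1', hw⟩) (not_le.mpr h2')
  obtain ⟨N₁, eL⟩ := hexp.elim
  refine ⟨Lc, N₁, eL, ?_⟩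
  intro m
  by_cases hm : m ∈ Lc.map Prod.fst
  · obtain ⟨i, rfl⟩ := fst_mem_iff.mp hm
    rw [eL.apply_get i, hsucc i, hfst i]
    obtain ⟨hc, hmin, hle⟩ := hnxt _ (haD i.1)
    exact hle
  · rw [eL.apply_of_not_mem hm]
    exact hdom m

/-- every dominated stable matching is reachable by rotation eliminations -/
lemma reach (hN : I.IsStable N) (hM' : I.IsStable M') (hdom : I.Dominates N M') :
    ∃ Ls, I.ElimSeq N Ls M' := by
  suffices h : ∀ (k : ℕ) (N : Fin n ≃ Fin n), I.IsStable N → I.Dominates N M' →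
      I.msum M' - I.msum N ≤ k → ∃ Ls, I.ElimSeq N Ls M' by
    exact h (I.msum M') N hN hdom (by omega)
  intro k
  induction k with
  | zero =>
    intro N hN hdom hle
    have hsum : I.msum M' ≤ I.msum N := by omega
    have heq : N = M' := by
      apply Equiv.ext
      intro m
      apply I.mrank_inj m
      have h1 := hdom m
      by_contra hcon
      have hlt : I.mrank m (N m) < I.mrank m (M' m) := lt_of_le_of_ne h1 hcon
      have : I.msum N < I.msum M' :=
        Finset.sum_lt_sum (fun m _ => hdom m) ⟨m, Finset.mem_univ _, hlt⟩
      omega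
    exact ⟨[], heq.symm⟩
  | succ k ih =>
    intro N hN hdom hle
    by_cases hne : N = M'
    · exact ⟨[], hne.symm⟩
    · obtain ⟨L, N₁, eL, hdom₁⟩ := exists_step hN hM' hdom hne
      have h1 : I.msum N < I.msum N₁ := eL.msum_lt
      have h2 : I.msum N₁ ≤ I.msum M' := Finset.sum_le_sum fun m _ => hdom₁ m
      obtain ⟨Ls, hLs⟩ := ih N₁ (eL.stable hN) hdom₁ (by omega)
      exact ⟨L :: Ls, N₁, eL, hLs⟩

end SMInst
namespace SMInst

variable {n : ℕ} {I : SMInst n} {M M' N N' N₁ N₂ A B C P Q : Fin n ≃ Fin n}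
  {L K J : List (Fin n × Fin n)} {Ls Ls' π π' : List (List (Fin n × Fin n))} {m w : Fin n}

open ExposedIn

section Meet

/-- crossing pairs between two stable matchings are impossible -/
lemma cross_absurd (hP : I.IsStable P) (hQ : I.IsStable Q) {m₁ m₂ w : Fin n}
    (h1 : P m₁ = w) (h2 : Q m₂ = w) (hne : m₁ ≠ m₂)
    (hb1 : I.mrank m₁ (P m₁) ≤ I.mrank m₁ (Q m₁))
    (hb2 : I.mrank m₂ (Q m₂) ≤ I.mrank m₂ (P m₂)) : False := by
  have hQ1 : Q m₁ ≠ w := fun hc => hne (Q.injective (hc.trans h2.symm))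
  have hP2 : P m₂ ≠ w := fun hc => hne (P.injective (h1.trans hc.symm))
  have hs1 : I.mrank m₁ w < I.mrank m₁ (Q m₁) := by
    rcases lt_or_eq_of_le hb1 with h | h
    · rw [h1] at h; exact h
    · exact absurd (I.mrank_inj m₁ (h1 ▸ h : I.mrank m₁ w = I.mrank m₁ (Q m₁))).symm hQ1
  have hs2 : I.mrank m₂ w < I.mrank m₂ (P m₂) := by
    rcases lt_or_eq_of_le hb2 with h | h
    · rw [h2] at h; exact h
    · exact absurd (I.mrank_inj m₂ (h2 ▸ h : I.mrank m₂ w = I.mrank m₂ (P m₂))).symm hP2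
  have hrne : I.wrank w m₁ ≠ I.wrank w m₂ := fun h => hne (I.wrank_inj w h)
  rcases lt_or_gt_of_ne hrne with h | h
  · refine hQ m₁ w ⟨hs1, ?_⟩
    have : Q.symm w = m₂ := by rw [← h2, Equiv.symm_apply_apply]
    rw [this]
    exact h
  · refine hP m₂ w ⟨hs2, ?_⟩
    have : P.symm w = m₁ := by rw [← h1, Equiv.symm_apply_apply]
    rw [this]
    exact h

variable (I M M')

/-- the meet function: each man picks his better partner -/
noncomputable def meetF : Fin n → Fin n := fun m =>
  if I.mrank m (M m) ≤ I.mrank m (M' m) then M m else M' m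

variable {I M M'}

lemma meetF_or (m : Fin n) : meetF I M M' m = M m ∨ meetF I M M' m = M' m := by
  unfold meetF
  split <;> simp

lemma meetF_le_left (m : Fin n) : I.mrank m (meetF I M M' m) ≤ I.mrank m (M m) := by
  unfold meetF
  split
  · exact le_refl _
  · omega

lemma meetF_le_right (m : Fin n) : I.mrank m (meetF I M M' m) ≤ I.mrank m (M' m) := by
  unfold meetF
  split
  · assumption
  · exact le_refl _

lemma meetF_inj (hM : I.IsStable M) (hM' : I.IsStable M') :
    Function.Injective (meetF I M M') := by
  intro m₁ m₂ h
  by_contra hne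
  by_cases c₁ : I.mrank m₁ (M m₁) ≤ I.mrank m₁ (M' m₁) <;>
    by_cases c₂ : I.mrank m₂ (M m₂) ≤ I.mrank m₂ (M' m₂)
  · rw [meetF, if_pos c₁, meetF, if_pos c₂] at h
    exact hne (M.injective h)
  · rw [meetF, if_pos c₁, meetF, if_neg c₂] at h
    exact cross_absurd hM hM' h rfl hne c₁ (le_of_lt (not_le.mp c₂))
  · rw [meetF, if_neg c₁, meetF, if_pos c₂] at h
    exact cross_absurd hM' hM h rfl hne (le_of_lt (not_le.mp c₁)) c₂
  · rw [meetF, if_neg c₁, meetF, if_neg c₂] at h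
    exact hne (M'.injective h)

variable (I M M')

/-- the meet of two stable matchings -/
noncomputable def meet (hM : I.IsStable M) (hM' : I.IsStable M') : Fin n ≃ Fin n :=
  Equiv.ofBijective (meetF I M M') (Finite.injective_iff_bijective.mp (meetF_inj hM hM'))

variable {I M M'}

lemma meet_apply (hM : I.IsStable M) (hM' : I.IsStable M') (m : Fin n) :
    meet I M M' hM hM' m = meetF I M M' m := rfl

lemma meet_symm_or (hM : I.IsStable M) (hM' : I.IsStable M') (w : Fin n) :
    (meet I M M' hM hM').symm w = M.symm w ∨ (meet I M M' hM hM').symm w = M'.symm w := by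
  set mt := meet I M M' hM hM'
  have h : meetF I M M' (mt.symm w) = w := mt.apply_symm_apply w
  rcases meetF_or (I := I) (M := M) (M' := M') (mt.symm w) with h1 | h1
  · left
    rw [h1] at h
    rw [eq_comm, Equiv.symm_apply_eq]
    exact h.symm
  · right
    rw [h1] at h
    rw [eq_comm, Equiv.symm_apply_eq]
    exact h.symm

lemma meet_stable (hM : I.IsStable M) (hM' : I.IsStable M') :
    I.IsStable (meet I M M' hM hM') := by
  rintro m w ⟨h1, h2⟩
  rcases meet_symm_or hM hM' w with hs | hs
  · rw [hs] at h2
    exact hM m w ⟨lt_of_lt_of_le h1 (meetF_le_left m), h2⟩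
  · rw [hs] at h2
    exact hM' m w ⟨lt_of_lt_of_le h1 (meetF_le_right m), h2⟩

lemma meet_dominates_left (hM : I.IsStable M) (hM' : I.IsStable M') :
    I.Dominates (meet I M M' hM hM') M := fun m => meetF_le_left m

lemma meet_dominates_right (hM : I.IsStable M) (hM' : I.IsStable M') :
    I.Dominates (meet I M M' hM hM') M' := fun m => meetF_le_right m

/-- a rotation exposed in both matchings is exposed in their meet -/
lemma meet_exposed (hM : I.IsStable M) (hM' : I.IsStable M')
    (hL : I.ExposedIn M L) (hL' : I.ExposedIn M' L) :
    I.ExposedIn (meet I M M' hM hM') L := by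
  refine ⟨hL.len, hL.nodup_fst, ?_, ?_⟩
  · intro p hp
    rcases meetF_or (I := I) (M := M) (M' := M') p.1 with h | h
    · rw [meet_apply, h]; exact hL.pair_mem hp
    · rw [meet_apply, h]; exact hL'.pair_mem hp
  · intro i
    refine ⟨(hL.cond i).1, (hL.cond i).2.1, ?_⟩
    intro w h1 h2 hw
    rcases meet_symm_or hM hM' w with hs | hs
    · rw [hs] at hw
      exact (hL.cond i).2.2 w h1 h2 hw
    · rw [hs] at hw
      exact (hL'.cond i).2.2 w h1 h2 hw

end Meet

end SMInst
namespace SMInst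

variable {n : ℕ} {I : SMInst n} {M M' N N' N₁ N₂ A B C : Fin n ≃ Fin n}
  {L K J K' : List (Fin n × Fin n)} {Ls Ls' π π' c c₂ : List (List (Fin n × Fin n))} {m w : Fin n}

open ExposedIn

/-- index of a man in a rotation is unique -/
lemma idx_unique (hnd : (L.map Prod.fst).Nodup) {i j : Fin L.length}
    (h : (L.get i).1 = (L.get j).1) : i = j := by
  have hi : ((L.map Prod.fst).get ⟨i.1, by simpa using i.2⟩) = (L.get i).1 := by simp
  have hj : ((L.map Prod.fst).get ⟨j.1, by simpa using j.2⟩) = (L.get j).1 := by simp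
  have h2 := hnd.get_inj_iff.mp (hi.trans (h.trans hj.symm))
  injection h2 with h3
  exact Fin.ext h3

/-- the pair woman and successor woman of a man in a rotation list -/
noncomputable def pwsw (L : List (Fin n × Fin n)) (m : Fin n) : Fin n × Fin n :=
  if h : ∃ i : Fin L.length, (L.get i).1 = m then
    ((L.get h.choose).2, (L.get (sIdx L h.choose)).2)
  else (m, m)

lemma pwsw_spec (hnd : (L.map Prod.fst).Nodup) {i : Fin L.length} (him : (L.get i).1 = m) :
    pwsw L m = ((L.get i).2, (L.get (sIdx L i)).2) := by
  have h : ∃ j : Fin L.length, (L.get j).1 = m := ⟨i, him⟩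
  rw [pwsw, dif_pos h]
  have : h.choose = i := idx_unique hnd (h.choose_spec.trans him.symm)
  rw [this]

/-- validity of a list of rotations for a man -/
def ValidFor (I : SMInst n) (m : Fin n) (c : List (List (Fin n × Fin n))) : Prop :=
  ∀ K ∈ c, m ∈ K.map Prod.fst ∧ (K.map Prod.fst).Nodup ∧ ∃ N₁, I.ExposedIn N₁ K

lemma ValidFor.incr (hv : I.ValidFor m c) (hK : K ∈ c) :
    I.mrank m (pwsw K m).1 < I.mrank m (pwsw K m).2 := by
  obtain ⟨hm, hnd, N₁, hexp⟩ := hv K hK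
  obtain ⟨i, hi⟩ := fst_mem_iff.mp hm
  rw [pwsw_spec hnd hi]
  have := (hexp.cond i).1
  rw [hi] at this
  exact this

/-- pwsw is intrinsic: it only depends on the set of pairs -/
lemma pwsw_congr (hK : I.ExposedIn N K) (hK' : I.ExposedIn N₂ K')
    (hKK' : K.toFinset = K'.toFinset) (hm : m ∈ K.map Prod.fst) :
    pwsw K m = pwsw K' m := by
  obtain ⟨i, hi⟩ := fst_mem_iff.mp hm
  have hm' : m ∈ K'.map Prod.fst := fst_mem_transfer hKK'.symm hm
  obtain ⟨j, hj⟩ := fst_mem_iff.mp hm'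
  rw [pwsw_spec hK.nodup_fst hi, pwsw_spec hK'.nodup_fst hj]
  have hfst : (K.get i).1 = (K'.get j).1 := hi.trans hj.symm
  have hsnd : (K.get i).2 = (K'.get j).2 := by
    have h1 : K.get i ∈ K'.toFinset := by
      rw [← hKK']; exact List.mem_toFinset.mpr (K.get_mem _)
    have h2 := hK'.pair_mem (List.mem_toFinset.mp h1)
    have h3 := hK'.pair_get j
    rw [hfst] at h2
    rw [← h2, ← h3]
  have hsucc : (K.get (sIdx K i)).2 = (K'.get (sIdx K' j)).2 :=
    ExposedIn.succ_eq hK hK' hKK' hfst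
  rw [hsnd, hsucc]

/-- the chain of partner changes for a man -/
def MChain (m : Fin n) : Fin n → List (List (Fin n × Fin n)) → Fin n → Prop
  | u, [], v => v = u
  | u, K :: t, v => (pwsw K m).1 = u ∧ MChain m (pwsw K m).2 t v

/-- each elimination sequence induces a chain for each man -/
lemma ElimSeq.mchain (h : I.ElimSeq N Ls M) (m : Fin n) :
    MChain m (N m) (Ls.filter (fun K => decide (m ∈ K.map Prod.fst))) (M m) := by
  induction Ls generalizing N with
  | nil => rw [show M = N from h]; exact rfl
  | cons K t ih =>
    obtain ⟨N₁, eK, ht⟩ := h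
    by_cases hm : m ∈ K.map Prod.fst
    · rw [List.filter_cons_of_pos (by simpa using hm)]
      obtain ⟨i, hi⟩ := fst_mem_iff.mp hm
      have hps := pwsw_spec eK.exposed.nodup_fst hi
      refine ⟨?_, ?_⟩
      · rw [hps]
        have := eK.exposed.pair_get i
        rw [hi] at this
        rw [← this]
      · have hsw : (pwsw K m).2 = N₁ m := by
          rw [hps]
          have := eK.apply_get i
          rw [hi] at this
          rw [← this]
        rw [hsw]
        exact ih ht
    · rw [List.filter_cons_of_neg (by simpa using hm)]
      have : N₁ m = N m := eK.apply_of_not_mem hm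
      rw [← this]
      exact ih ht

/-- trace validity from a sequence -/
lemma ElimSeq.validFor (h : I.ElimSeq N Ls M) (m : Fin n) :
    I.ValidFor m (Ls.filter (fun K => decide (m ∈ K.map Prod.fst))) := by
  intro K hK
  have hmem := List.mem_of_mem_filter hK
  have hprop : m ∈ K.map Prod.fst := by simpa using List.of_mem_filter hK
  obtain ⟨N₁, hexp⟩ := h.mem_exposed hmem
  exact ⟨hprop, hexp.nodup_fst, N₁, hexp⟩

lemma mchain_le (hv : I.ValidFor m c) {u v : Fin n} (hc : MChain m u c v) :
    I.mrank m u ≤ I.mrank m v := by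
  induction c generalizing u with
  | nil => rw [show v = u from hc]
  | cons K t ih =>
    obtain ⟨h1, h2⟩ := hc
    have hincr := hv.incr (List.mem_cons_self)
    rw [h1] at hincr
    have hv' : I.ValidFor m t := fun J hJ => hv J (List.mem_cons_of_mem _ hJ)
    exact le_of_lt (lt_of_lt_of_le hincr (ih hv' h2))

lemma mchain_src_ge (hv : I.ValidFor m c) {u v : Fin n} (hc : MChain m u c v)
    (hK : K ∈ c) : I.mrank m u ≤ I.mrank m (pwsw K m).1 := by
  induction c generalizing u with
  | nil => cases hK
  | cons X t ih =>
    obtain ⟨h1, h2⟩ := hc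
    rcases List.mem_cons.mp hK with rfl | hKt
    · rw [h1]
    · have hv' : I.ValidFor m t := fun J hJ => hv J (List.mem_cons_of_mem _ hJ)
      have hincr := hv.incr (List.mem_cons_self)
      rw [h1] at hincr
      exact le_of_lt (lt_of_lt_of_le hincr (ih hv' h2 hKt))

/-- main chain comparison: if the moves of `c₁` are among those of `c₂`, the endpoint of
`c₁` is weakly better -/
lemma mchain_compare {c₁ c₂ : List (List (Fin n × Fin n))} {u v₁ v₂ : Fin n}
    (hv₁ : I.ValidFor m c₁) (hv₂ : I.ValidFor m c₂)
    (hnd₁ : (c₁.map List.toFinset).Nodup) (hnd₂ : (c₂.map List.toFinset).Nodup)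
    (hsub : ∀ K ∈ c₁, ∃ K' ∈ c₂, K'.toFinset = K.toFinset)
    (hc₁ : MChain m u c₁ v₁) (hc₂ : MChain m u c₂ v₂) :
    I.mrank m v₁ ≤ I.mrank m v₂ := by
  induction c₁ generalizing u c₂ with
  | nil =>
    rw [show v₁ = u from hc₁]
    exact mchain_le hv₂ hc₂
  | cons K t ih =>
    obtain ⟨h1, h2⟩ := hc₁
    obtain ⟨K', hK'c₂, hKK'⟩ := hsub K (List.mem_cons_self)
    -- pwsw agree on K and K'
    have hpw : pwsw K' m = pwsw K m := by
      obtain ⟨hmK, hndK, NK, hexpK⟩ := hv₁ K (List.mem_cons_self)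
      obtain ⟨hmK', hndK', NK', hexpK'⟩ := hv₂ K' hK'c₂
      exact (pwsw_congr hexpK hexpK' hKK'.symm hmK).symm
    cases c₂ with
    | nil => cases hK'c₂
    | cons X t₂ =>
      obtain ⟨g1, g2⟩ := hc₂
      have hv₂' : I.ValidFor m t₂ := fun J hJ => hv₂ J (List.mem_cons_of_mem _ hJ)
      -- K' must be the head X
      have hKX : K' = X := by
        rcases List.mem_cons.mp hK'c₂ with h | h
        · exact h
        · exfalso
          have hge := mchain_src_ge hv₂' g2 h
          rw [hpw, h1] at hge
          have hincr := hv₂.incr (List.mem_cons_self)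
          rw [g1] at hincr
          exact absurd (lt_of_lt_of_le hincr hge) (lt_irrefl _)
      have hg2 : MChain m (pwsw K m).2 t₂ v₂ := by
        rw [← hKX, hpw] at g2
        exact g2
      refine ih (fun J hJ => hv₁ J (List.mem_cons_of_mem _ hJ)) hv₂'
        (List.Nodup.of_cons hnd₁) (List.Nodup.of_cons hnd₂) ?_ h2 hg2
      intro J hJ
      obtain ⟨J', hJ', hJJ'⟩ := hsub J (List.mem_cons_of_mem _ hJ)
      rcases List.mem_cons.mp hJ' with h | h
      · exfalso
        -- J' = X, so J.toFinset = K.toFinset, contradicting nodup of c₁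
        have hXK : X.toFinset = K.toFinset := by rw [← hKX, hKK']
        rw [h, hXK] at hJJ'
        have hmem : J.toFinset ∈ (t.map List.toFinset) := List.mem_map.mpr ⟨J, hJ, rfl⟩
        rw [← hJJ'] at hmem
        exact (List.nodup_cons.mp hnd₁).1 hmem
      · exact ⟨J', h, hJJ'⟩

/-- domination from containment of rotation multisets -/
lemma dominates_of_sub (h : I.ElimSeq N π M) (h' : I.ElimSeq N π' M')
    (hsub : ∀ K ∈ π, ∃ K' ∈ π', K'.toFinset = K.toFinset) : I.Dominates M M' := by
  intro m
  have hc₁ := h.mchain m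
  have hc₂ := h'.mchain m
  have hv₁ := h.validFor m
  have hv₂ := h'.validFor m
  have hnd₁ : ((π.filter (fun K => decide (m ∈ K.map Prod.fst))).map List.toFinset).Nodup :=
    h.nodup_sets.sublist ((List.filter_sublist (l := π)).map List.toFinset)
  have hnd₂ : ((π'.filter (fun K => decide (m ∈ K.map Prod.fst))).map List.toFinset).Nodup :=
    h'.nodup_sets.sublist ((List.filter_sublist (l := π')).map List.toFinset)
  refine mchain_compare hv₁ hv₂ hnd₁ hnd₂ ?_ hc₁ hc₂
  intro K hK
  obtain ⟨K', hK', hKK'⟩ := hsub K (List.mem_of_mem_filter hK)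
  refine ⟨K', List.mem_filter.mpr ⟨hK', ?_⟩, hKK'⟩
  have hm : m ∈ K.map Prod.fst := by simpa using List.of_mem_filter hK
  simpa using fst_mem_transfer hKK' hm

lemma Dominates.antisymm (h : I.Dominates M M') (h' : I.Dominates M' M) : M = M' := by
  apply Equiv.ext
  intro m
  exact I.mrank_inj m (le_antisymm (h m) (h' m))

end SMInst
namespace SMInst

variable {n : ℕ} {I : SMInst n} {M M' M₀ N N' N₁ N₂ A B C : Fin n ≃ Fin n}
  {L K J K' L' L₀ : List (Fin n × Fin n)} {Ls π π' : List (List (Fin n × Fin n))} {m w : Fin n}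
  {S S' T R R' : Finset (Fin n × Fin n)}

open ExposedIn

/-- exposedness transfers along equality of pair sets -/
lemma ExposedIn.congr (hK : I.ExposedIn N K) (hL : I.ExposedIn N₂ L)
    (hKL : K.toFinset = L.toFinset) : I.ExposedIn N L := by
  have memLK : ∀ p ∈ L, p ∈ K := fun p hp =>
    List.mem_toFinset.mp (hKL ▸ List.mem_toFinset.mpr hp)
  refine ⟨hL.len, hL.nodup_fst, fun p hp => hK.pair_mem (memLK p hp), ?_⟩
  intro i
  refine ⟨(hL.cond i).1, (hL.cond i).2.1, ?_⟩
  intro w h1 h2 hw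
  obtain ⟨j, hj⟩ := List.mem_iff_get.mp (memLK _ (L.get_mem i))
  have hfst : (K.get j).1 = (L.get i).1 := by rw [hj]
  have hsnd : (K.get j).2 = (L.get i).2 := by rw [hj]
  have hsucc : (K.get (sIdx K j)).2 = (L.get (sIdx L i)).2 := succ_eq hK hL hKL hfst
  have h1' : I.mrank (K.get j).1 (K.get j).2 < I.mrank (K.get j).1 w := by
    rw [hfst, hsnd]; exact h1
  have h2' : I.mrank (K.get j).1 w < I.mrank (K.get j).1 (K.get (sIdx K j)).2 := by
    rw [hfst, hsucc]; exact h2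
  have := (hK.cond j).2.2 w h1' h2'
  rw [hfst] at this
  exact this hw

/-- the man-optimal matching is unique -/
lemma manopt_unique (h : I.IsManOptimal M₀) (h' : I.IsManOptimal N) : N = M₀ :=
  Dominates.antisymm (h'.2 M₀ h.1) (h.2 N h'.1)

/-- rotation sets of a sequence -/
def rsets (Ls : List (List (Fin n × Fin n))) : Finset (Finset (Fin n × Fin n)) :=
  (Ls.map List.toFinset).toFinset

lemma mem_rsets {X : Finset (Fin n × Fin n)} :
    X ∈ rsets Ls ↔ ∃ K ∈ Ls, K.toFinset = X := by
  simp [rsets]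

/-- any two sequences from the same start to the same end have the same rotation sets -/
lemma ElimSeq.rsets_eq (h : I.ElimSeq N π M) (h' : I.ElimSeq N π' M) :
    rsets π = rsets π' :=
  List.toFinset_eq_of_perm _ _ (h.perm_sets h')

/-- dominance yields containment of rotation sets -/
lemma rsets_sub_of_dominates (hN : I.IsStable N) (h : I.ElimSeq N π M)
    (h' : I.ElimSeq N π' M') (hdom : I.Dominates M M') : rsets π ⊆ rsets π' := by
  have hM : I.IsStable M := h.stable hN
  have hM' : I.IsStable M' := h'.stable hN
  obtain ⟨ρ, hρ⟩ := reach hM hM' hdom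
  have happ : I.ElimSeq N (π ++ ρ) M' := h.append hρ
  have hperm := happ.perm_sets h'
  intro X hX
  obtain ⟨K, hK, hKX⟩ := mem_rsets.mp hX
  have : K.toFinset ∈ (π ++ ρ).map List.toFinset :=
    List.mem_map.mpr ⟨K, List.mem_append_left _ hK, rfl⟩
  have : K.toFinset ∈ π'.map List.toFinset := hperm.mem_iff.mp this
  obtain ⟨K', hK', hKK'⟩ := List.mem_map.mp this
  exact mem_rsets.mpr ⟨K', hK', hKK'.trans hKX⟩

/-- containment of rotation sets yields dominance -/
lemma dominates_of_rsets_sub (h : I.ElimSeq N π M) (h' : I.ElimSeq N π' M')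
    (hsub : rsets π ⊆ rsets π') : I.Dominates M M' := by
  refine dominates_of_sub h h' ?_
  intro K hK
  have : K.toFinset ∈ rsets π' := hsub (mem_rsets.mpr ⟨K, hK, rfl⟩)
  obtain ⟨K', hK', hKK'⟩ := mem_rsets.mp this
  exact ⟨K', hK', hKK'⟩

/-- the rotation set of any elimination sequence from the man-optimal matching is closed -/
lemma rsets_closed (hM₀ : I.IsManOptimal M₀) (h : I.ElimSeq M₀ π M) :
    I.IsClosedF (rsets π) := by
  constructor
  · intro R hR
    obtain ⟨K, hK, hKR⟩ := mem_rsets.mp hR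
    obtain ⟨_, _, N₁, _, _, hseq, helim, _⟩ := h.decomp hK
    exact ⟨K, ⟨N₁, hseq.stable hM₀.1, helim.exposed⟩, hKR⟩
  · intro R hR R' hR' hprec
    obtain ⟨K, hK, hKR⟩ := mem_rsets.mp hR
    obtain ⟨L', L0, hrotL', hrotL0, hL'R', hL0R, hprec'⟩ := hprec
    obtain ⟨Ls₁, Ls₂, N₁, N₂, hπeq, hseq, helim, _⟩ := h.decomp hK
    obtain ⟨M₂, hM₂s, hM₂e⟩ := hrotL0
    have hexpL0 : I.ExposedIn N₁ L0 :=
      ExposedIn.congr helim.exposed hM₂e (hKR.trans hL0R.symm)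
    obtain ⟨Kp, hKp, hKpL'⟩ := hprec' M₀ Ls₁ N₁ hM₀ hseq (hseq.stable hM₀.1) hexpL0
    refine mem_rsets.mpr ⟨Kp, ?_, hKpL'.trans hL'R'⟩
    rw [hπeq]
    exact List.mem_append_left _ hKp

/-- Corresponds via rsets -/
lemma corresponds_iff {S : Finset (Finset (Fin n × Fin n))} :
    I.Corresponds M₀ S M ↔ ∃ π, I.ElimSeq M₀ π M ∧ rsets π = S := by
  constructor
  · rintro ⟨π, hnd, hS, hseq⟩
    exact ⟨π, hseq, hS⟩
  · rintro ⟨π, hseq, hS⟩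
    exact ⟨π, hseq.nodup_sets, hS, hseq⟩

end SMInst
namespace SMInst

variable {n : ℕ} {I : SMInst n} {M M' M₀ N : Fin n ≃ Fin n}

open ExposedIn

/-- every closed subset of the rotation poset is realized by a stable matching -/
lemma realize (hM₀ : I.IsManOptimal M₀) {S : Finset (Finset (Fin n × Fin n))}
    (hS : I.IsClosedF S) : ∃ M π, I.ElimSeq M₀ π M ∧ rsets π = S := by
  classical
  have key : ∀ (T : Finset (Finset (Fin n × Fin n))) (M_T : Fin n ≃ Fin n)
      (π_T : List (List (Fin n × Fin n))), T ⊆ S → (S \ T).Nonempty →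
      I.ElimSeq M₀ π_T M_T → rsets π_T = T →
      ∃ R₀ ∈ S \ T, ∃ L₀ N₃, L₀.toFinset = R₀ ∧ I.Elim M_T N₃ L₀ := by
    intro T M_T π_T hTS hne hseqT hrsT
    set P : Finset (Fin n × Fin n) → ℕ → Prop := fun R c =>
      ∃ (L₀ : List (Fin n × Fin n)) (Mst : Fin n ≃ Fin n)
        (πs : List (List (Fin n × Fin n))), L₀.toFinset = R ∧ I.ElimSeq M₀ πs Mst ∧
        I.ExposedIn Mst L₀ ∧ (rsets πs).card = c with hP
    have hPex : ∀ R ∈ I.RotSet, ∃ c, P R c := by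
      intro R hR
      obtain ⟨L₀, ⟨M₁, hM₁s, hM₁e⟩, hL₀R⟩ := hR
      obtain ⟨π, hπ⟩ := reach hM₀.1 hM₁s (hM₀.2 M₁ hM₁s)
      exact ⟨(rsets π).card, L₀, M₁, π, hL₀R, hπ, hM₁e, rfl⟩
    have hsel : ∀ R, ∃ c, R ∈ S \ T → P R c ∧ ∀ c', P R c' → c ≤ c' := by
      intro R
      by_cases hR : R ∈ S \ T
      · have hRrot : R ∈ I.RotSet := hS.1 R (Finset.mem_sdiff.mp hR).1
        have hex : ∃ c, P R c := hPex R hRrot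
        exact ⟨Nat.find hex, fun _ =>
          ⟨Nat.find_spec hex, fun c' hc' => Nat.find_min' hex hc'⟩⟩
      · exact ⟨0, fun h => absurd h hR⟩
    choose μ hμ using hsel
    obtain ⟨R₀, hR₀mem, hR₀min⟩ := Finset.exists_min_image (S \ T) μ hne
    obtain ⟨⟨L₀, Mst, πst, hL₀R₀, hseqst, hexpst, hcardst⟩, hminP⟩ := hμ R₀ hR₀mem
    have hR₀S : R₀ ∈ S := (Finset.mem_sdiff.mp hR₀mem).1
    have hR₀notT : R₀ ∉ T := (Finset.mem_sdiff.mp hR₀mem).2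
    have hMsts : I.IsStable Mst := hseqst.stable hM₀.1
    -- Claim 1: every rotation used to reach Mst precedes L₀
    have hprecAll : ∀ K ∈ πst, I.Precedes K L₀ := by
      intro K hK
      intro M₀' Ls M1 hM₀' hseq1 hstab1 hexp1
      by_contra hno
      push_neg at hno
      have hM₀'eq : M₀' = M₀ := manopt_unique hM₀ hM₀'
      subst hM₀'eq
      have hmst : I.IsStable (meet I Mst M1 hMsts hstab1) := meet_stable hMsts hstab1
      have hmexp : I.ExposedIn (meet I Mst M1 hMsts hstab1) L₀ :=
        meet_exposed hMsts hstab1 hexpst hexp1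
      obtain ⟨πm, hπm⟩ := reach hM₀.1 hmst (hM₀.2 _ hmst)
      have hsub1 : rsets πm ⊆ rsets πst :=
        rsets_sub_of_dominates hM₀.1 hπm hseqst (meet_dominates_left hMsts hstab1)
      have hsub2 : rsets πm ⊆ rsets Ls :=
        rsets_sub_of_dominates hM₀.1 hπm hseq1 (meet_dominates_right hMsts hstab1)
      have hKin : K.toFinset ∈ rsets πst := mem_rsets.mpr ⟨K, hK, rfl⟩
      have hKnot : K.toFinset ∉ rsets Ls := by
        intro hc
        obtain ⟨K', hK', hKK'⟩ := mem_rsets.mp hc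
        exact hno K' hK' hKK'
      have hKnotm : K.toFinset ∉ rsets πm := fun hc => hKnot (hsub2 hc)
      have hss : rsets πm ⊂ rsets πst :=
        ⟨hsub1, fun hc => hKnotm (hc hKin)⟩
      have hlt : (rsets πm).card < (rsets πst).card := Finset.card_lt_card hss
      have := hminP (rsets πm).card ⟨L₀, _, πm, hL₀R₀, hπm, hmexp, rfl⟩
      omega
    -- Claim A: the rotations used to reach Mst all lie in S
    have hsubS : rsets πst ⊆ S := by
      intro X hX
      obtain ⟨K, hK, hKX⟩ := mem_rsets.mp hX
      obtain ⟨a, b, Na, Nb, hπeq, hseqa, helimK, _⟩ := hseqst.decomp hK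
      have hKrot : I.IsRotation K := ⟨Na, hseqa.stable hM₀.1, helimK.exposed⟩
      have hL₀rot : I.IsRotation L₀ := ⟨Mst, hMsts, hexpst⟩
      have hprecR : I.PrecedesR K.toFinset R₀ :=
        ⟨K, L₀, hKrot, hL₀rot, rfl, hL₀R₀, hprecAll K hK⟩
      rw [← hKX]
      exact hS.2 R₀ hR₀S K.toFinset ⟨K, hKrot, rfl⟩ hprecR
    -- Claim B: they in fact lie in T
    have hsubT : rsets πst ⊆ T := by
      by_contra hc
      obtain ⟨R₁, hR₁in, hR₁notT⟩ := Finset.not_subset.mp hc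
      have hR₁ST : R₁ ∈ S \ T := Finset.mem_sdiff.mpr ⟨hsubS hR₁in, hR₁notT⟩
      obtain ⟨K₁, hK₁, hK₁R₁⟩ := mem_rsets.mp hR₁in
      obtain ⟨a, b, Na, Nb, hπeq, hseqa, helimK, _⟩ := hseqst.decomp hK₁
      have hPa : P R₁ (rsets a).card := ⟨K₁, Na, a, hK₁R₁, hseqa, helimK.exposed, rfl⟩
      have hminR₁ := (hμ R₁ hR₁ST).2 _ hPa
      have hnd := hseqst.nodup_sets
      rw [hπeq, List.map_append] at hnd
      obtain ⟨hnd1, hnd2, hdisj⟩ := List.nodup_append.mp hnd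
      have hKnota : K₁.toFinset ∉ rsets a := by
        intro hin
        obtain ⟨K', hK', hKK'⟩ := mem_rsets.mp hin
        have h1 : K'.toFinset ∈ List.map List.toFinset a := List.mem_map.mpr ⟨K', hK', rfl⟩
        have h2 : K'.toFinset ∉ List.map List.toFinset (K₁ :: b) := fun h2' => hdisj _ h1 _ h2' rfl
        refine h2 ?_
        rw [hKK']
        exact List.mem_cons_self
      have hsubaux : rsets a ⊆ rsets πst := by
        intro X hX
        obtain ⟨K', hK', e⟩ := mem_rsets.mp hX
        refine mem_rsets.mpr ⟨K', ?_, e⟩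
        rw [hπeq]
        exact List.mem_append_left _ hK'
      have hKinπ : K₁.toFinset ∈ rsets πst := mem_rsets.mpr ⟨K₁, hK₁, rfl⟩
      have hK₁nota : R₁ ∉ rsets a := by rw [← hK₁R₁]; exact hKnota
      have hss : rsets a ⊂ rsets πst :=
        ⟨hsubaux, fun h => hKnota (h hKinπ)⟩
      have hlt := Finset.card_lt_card hss
      have hge := hR₀min R₁ hR₁ST
      omega
    -- transfer exposure of L₀ to M_T
    have hMTs : I.IsStable M_T := hseqT.stable hM₀.1
    have hdomT : I.Dominates Mst M_T :=
      dominates_of_rsets_sub hseqst hseqT (by rw [hrsT]; exact hsubT)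
    obtain ⟨ρ, hρ⟩ := reach hMsts hMTs hdomT
    have happ : I.ElimSeq M₀ (πst ++ ρ) M_T := hseqst.append hρ
    have hre : rsets (πst ++ ρ) = T := (happ.rsets_eq hseqT).trans hrsT
    have hexpT : I.ExposedIn M_T L₀ := by
      refine hρ.preserves hexpst ?_
      intro X hX hXL₀
      apply hR₀notT
      rw [← hre]
      exact mem_rsets.mpr ⟨X, List.mem_append_right _ hX, hXL₀.trans hL₀R₀⟩
    obtain ⟨N₃, hel⟩ := hexpT.elim
    exact ⟨R₀, hR₀mem, L₀, N₃, hL₀R₀, hel⟩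
  -- main induction on the number of missing rotations
  suffices main : ∀ (k : ℕ) (T : Finset (Finset (Fin n × Fin n))) (M_T : Fin n ≃ Fin n)
      (π_T : List (List (Fin n × Fin n))), T ⊆ S → I.ElimSeq M₀ π_T M_T →
      rsets π_T = T → (S \ T).card ≤ k → ∃ M π, I.ElimSeq M₀ π M ∧ rsets π = S by
    exact main (S \ ∅).card ∅ M₀ [] (Finset.empty_subset S) rfl (by simp [rsets]) (le_refl _)
  intro k
  induction k with
  | zero =>
    intro T M_T π_T hTS hseq hrs hcard
    have hST : S \ T = ∅ := Finset.card_eq_zero.mp (Nat.le_zero.mp hcard)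
    have hTSeq : T = S :=
      Finset.Subset.antisymm hTS (fun x hx => by
        by_contra hc
        have : x ∈ S \ T := Finset.mem_sdiff.mpr ⟨hx, hc⟩
        rw [hST] at this
        exact absurd this (Finset.notMem_empty x))
    exact ⟨M_T, π_T, hseq, hrs.trans hTSeq⟩
  | succ k ih =>
    intro T M_T π_T hTS hseq hrs hcard
    by_cases hTSeq : T = S
    · exact ⟨M_T, π_T, hseq, hrs.trans hTSeq⟩
    · have hne : (S \ T).Nonempty :=
        Finset.sdiff_nonempty.mpr (fun h => hTSeq (Finset.Subset.antisymm hTS h))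
      obtain ⟨R₀, hR₀, L₀, N₃, hL₀R₀, hel⟩ := key T M_T π_T hTS hne hseq hrs
      have hseq' : I.ElimSeq M₀ (π_T ++ [L₀]) N₃ := hseq.append ⟨N₃, hel, rfl⟩
      have hrs' : rsets (π_T ++ [L₀]) = insert R₀ T := by
        rw [rsets, List.map_append, List.toFinset_append]
        show (π_T.map List.toFinset).toFinset ∪ ([L₀].map List.toFinset).toFinset = _
        have h1 : ([L₀].map List.toFinset).toFinset = {R₀} := by simp [hL₀R₀]
        rw [h1]
        rw [show (π_T.map List.toFinset).toFinset = T from hrs]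
        rw [Finset.union_comm]
        exact (Finset.insert_eq R₀ T).symm
      have hR₀S : R₀ ∈ S := (Finset.mem_sdiff.mp hR₀).1
      have hR₀T : R₀ ∉ T := (Finset.mem_sdiff.mp hR₀).2
      refine ih (insert R₀ T) N₃ (π_T ++ [L₀]) ?_ hseq' hrs' ?_
      · exact Finset.insert_subset hR₀S hTS
      · have hsd : S \ insert R₀ T = (S \ T).erase R₀ := by
          ext x
          simp only [Finset.mem_sdiff, Finset.mem_insert, Finset.mem_erase]
          tauto
        rw [hsd]
        have h1 := Finset.card_erase_of_mem (Finset.mem_sdiff.mpr ⟨hR₀S, hR₀T⟩)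
        rw [h1]
        omega
end SMInst

/-- closed subsets of the rotation poset correspond bijectively to stable
matchings (via eliminating their rotations starting from the man-optimal matching),
and containment of closed subsets is equivalent to dominance of matchings. -/
theorem closed_subsets_biject_with_stable_matchings {n : ℕ} (I : SMInst n)
    (M₀ : Fin n ≃ Fin n) (hM₀ : I.IsManOptimal M₀) :
    (∀ S : Finset (Finset (Fin n × Fin n)), I.IsClosedF S →
      ∃! M : Fin n ≃ Fin n, I.IsStable M ∧ I.Corresponds M₀ S M) ∧
    (∀ M : Fin n ≃ Fin n, I.IsStable M →
      ∃! S : Finset (Finset (Fin n × Fin n)), I.IsClosedF S ∧ I.Corresponds M₀ S M) ∧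
    (∀ (S S' : Finset (Finset (Fin n × Fin n))) (M M' : Fin n ≃ Fin n),
      I.IsClosedF S → I.IsClosedF S' → I.Corresponds M₀ S M → I.Corresponds M₀ S' M' →
      (I.Dominates M M' ↔ S ⊆ S')) := by
  classical
  refine ⟨?_, ?_, ?_⟩
  · intro S hS
    obtain ⟨M, π, hseq, hrs⟩ := SMInst.realize hM₀ hS
    refine ⟨M, ⟨hseq.stable hM₀.1, SMInst.corresponds_iff.mpr ⟨π, hseq, hrs⟩⟩, ?_⟩
    rintro M' ⟨hM's, hcorr'⟩
    obtain ⟨π', hseq', hrs'⟩ := SMInst.corresponds_iff.mp hcorr'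
    have d1 : I.Dominates M' M :=
      SMInst.dominates_of_rsets_sub hseq' hseq (by rw [hrs', hrs])
    have d2 : I.Dominates M M' :=
      SMInst.dominates_of_rsets_sub hseq hseq' (by rw [hrs', hrs])
    exact SMInst.Dominates.antisymm d1 d2
  · intro M hM
    obtain ⟨π, hπ⟩ := SMInst.reach hM₀.1 hM (hM₀.2 M hM)
    refine ⟨SMInst.rsets π, ⟨SMInst.rsets_closed hM₀ hπ,
      SMInst.corresponds_iff.mpr ⟨π, hπ, rfl⟩⟩, ?_⟩
    rintro S ⟨hScl, hcorr⟩
    obtain ⟨π', hseq', hrs'⟩ := SMInst.corresponds_iff.mp hcorr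
    rw [← hrs']
    exact hseq'.rsets_eq hπ
  · intro S S' M M' hScl hS'cl hcorr hcorr'
    obtain ⟨π, hseq, hrs⟩ := SMInst.corresponds_iff.mp hcorr
    obtain ⟨π', hseq', hrs'⟩ := SMInst.corresponds_iff.mp hcorr'
    constructor
    · intro hdom
      rw [← hrs, ← hrs']
      exact SMInst.rsets_sub_of_dominates hM₀.1 hseq hseq' hdom
    · intro hsub
      refine SMInst.dominates_of_rsets_sub hseq hseq' ?_
      rw [hrs, hrs']
      exact hsub
end

section
/- Distance is monotone along dominance chains: if Mx ⪯ My ⪯ Mz are stable matchings of the same instance, then d(My, Mz) ≤ d(Mx, Mz) and d(Mx, My) ≤ d(Mx, Mz), where d counts the number of men with different partners in the two matchings. -/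
/-- distance is monotone along dominance chains of stable matchings. -/
theorem dist_monotone_along_chain {n : ℕ} (I : SMInst n) (Mx My Mz : Fin n ≃ Fin n)
    (hx : I.IsStable Mx) (hy : I.IsStable My) (hz : I.IsStable Mz)
    (hxy : I.Dominates Mx My) (hyz : I.Dominates My Mz) :
    I.mdist My Mz ≤ I.mdist Mx Mz ∧ I.mdist Mx My ≤ I.mdist Mx Mz := by
  have key : ∀ m, Mx m = Mz m → Mx m = My m ∧ My m = Mz m := by
    intro m h
    have h1 := hxy m
    have h2 := hyz m
    rw [h] at h1
    have heq : I.mrank m (Mz m) = I.mrank m (My m) := le_antisymm h1 h2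
    have := I.mrank_inj m heq
    constructor
    · rw [h, this]
    · rw [this]
  constructor <;>
  · apply Finset.card_le_card
    intro m hm
    simp only [Finset.mem_filter, Finset.mem_univ, true_and] at hm ⊢
    intro hx'
    rcases key m hx' with ⟨a, b⟩
    first
    | exact hm b
    | exact hm a
end
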